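/- arXiv:math/9801003 — 2 statements merged into one kernel-verified Lean document; each statement's English description precedes it below -/
import Mathlib

section
/- Let K be a commutative ℚ-algebra, A a finite set, R = K[[t^a_k : a ∈ A, k ∈ ℕ]] the ring of formal power series in the variables t^a_k, and J ⊆ R the ideal generated by {t^a_k : a ∈ A, k ≥ 1}. Suppose G ∈ J, and suppose that for every b ∈ A and every integer n ≥ 1 there exist elements A^{b,n}_a ∈ R (a ∈ A) with ∂G/∂t^b_n = ∑_{a∈A} A^{b,n}_a · ∂G/∂t^a_0. Then G = 0. -/
/-- The coefficientwise partial derivative `∂/∂t_s` on multivariate formal power series. -/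
noncomputable def pderivPS {σ : Type*} {K : Type*} [CommSemiring K] (s : σ)
    (f : MvPowerSeries σ K) : MvPowerSeries σ K :=
  fun d => (d s + 1) • MvPowerSeries.coeff (d + Finsupp.single s 1) f

/-- Membership in the (completed) ideal `J ⊆ R = K[[t^a_k : a ∈ A, k ∈ ℕ]]` generated by
the variables `t^a_k` with `k ≥ 1` (the variable `t^a_k` being the one indexed by
`(a, k) : A × ℕ`): a formal power series lies in `J` iff its coefficient at every
monomial involving only the variables `t^a_0` vanishes. -/
def memJ {K : Type*} [CommSemiring K] {A : Type*} (f : MvPowerSeries (A × ℕ) K) : Prop :=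
  ∀ d : (A × ℕ) →₀ ℕ, (∀ p ∈ d.support, p.2 = 0) → MvPowerSeries.coeff d f = 0

lemma coeff_pderivPS {σ : Type*} {K : Type*} [CommSemiring K] (s : σ)
    (f : MvPowerSeries σ K) (d : σ →₀ ℕ) :
    MvPowerSeries.coeff d (pderivPS s f) =
      (d s + 1) • MvPowerSeries.coeff (d + Finsupp.single s 1) f := by
  rw [MvPowerSeries.coeff_apply]; rfl

/-- Induction on the order of vanishing in the variables `{t^a_k : k ≥ 1}`: if `G ∈ J`
and, for each `b ∈ A` and `n ≥ 1`, `∂G/∂t^b_n` is an `R`-linear combination of the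
derivatives `∂G/∂t^a_0`, then `G = 0`. -/
theorem vanishing_from_first_order_system
    {K : Type*} [CommRing K] [Algebra ℚ K] {A : Type*} [Fintype A]
    (G : MvPowerSeries (A × ℕ) K)
    (hG : memJ G)
    (h : ∀ (b : A) (n : ℕ), 1 ≤ n → ∃ c : A → MvPowerSeries (A × ℕ) K,
      pderivPS (b, n) G = ∑ a : A, c a * pderivPS (a, 0) G) :
    G = 0 := by
  classical
  set w : ((A × ℕ) →₀ ℕ) → ℕ := fun d => d.sum (fun p m => if p.2 = 0 then 0 else m) with hw
  have wadd : ∀ u v, w (u + v) = w u + w v := by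
    intro u v
    simp only [hw]
    rw [Finsupp.sum_add_index]
    · intro p _; simp
    · intro p _ m1 m2; split <;> simp
  have key : ∀ N (d : (A × ℕ) →₀ ℕ), w d = N → MvPowerSeries.coeff d G = 0 := by
    intro N
    induction N using Nat.strong_induction_on with
    | _ N ih =>
      intro d hd
      by_cases h0 : ∀ p ∈ d.support, p.2 = 0
      · exact hG d h0
      · push_neg at h0
        obtain ⟨⟨b, n⟩, hp, hp2⟩ := h0
        simp only at hp2
        have hn : 1 ≤ n := Nat.one_le_iff_ne_zero.mpr hp2
        have hdp : 1 ≤ d (b, n) := by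
          have := Finsupp.mem_support_iff.mp hp
          omega
        set e := d - Finsupp.single (b, n) 1 with he
        have hed : e + Finsupp.single (b, n) 1 = d := by
          ext q
          simp only [he, Finsupp.add_apply, Finsupp.tsub_apply, Finsupp.single_apply]
          by_cases hq : (b, n) = q
          · simp only [if_pos hq]; subst hq; omega
          · simp [if_neg hq]
        have hws : w (Finsupp.single (b, n) 1) = 1 := by
          simp only [hw]
          rw [Finsupp.sum_single_index]
          · simp [hp2]
          · simp
        have hwe : w e + 1 = N := by
          have h1 := wadd e (Finsupp.single (b, n) 1)
          rw [hed, hws, hd] at h1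
          omega
        obtain ⟨c, hc⟩ := h b n hn
        have hR : MvPowerSeries.coeff e (∑ a : A, c a * pderivPS (a, 0) G) = 0 := by
          rw [map_sum]
          apply Finset.sum_eq_zero
          intro a _
          rw [MvPowerSeries.coeff_mul]
          apply Finset.sum_eq_zero
          intro uv huv
          have hsplit : uv.1 + uv.2 = e := by
            exact Finset.HasAntidiagonal.mem_antidiagonal.mp huv
          have hw2 : w (uv.2 + Finsupp.single (a, 0) 1) < N := by
            have h1 := wadd uv.1 uv.2
            rw [hsplit] at h1
            have h2 := wadd uv.2 (Finsupp.single (a, 0) 1)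
            have h3 : w (Finsupp.single (a, 0) 1) = 0 := by
              simp only [hw]
              rw [Finsupp.sum_single_index] <;> simp
            omega
          rw [coeff_pderivPS, ih _ hw2 _ rfl, smul_zero, mul_zero]
        have hL : (d (b, n) : K) * MvPowerSeries.coeff d G = 0 := by
          have h1 := coeff_pderivPS (b, n) G e
          rw [hc, hR] at h1
          have h2 : e (b, n) + 1 = d (b, n) := by
            simp only [he, Finsupp.tsub_apply, Finsupp.single_apply]
            simp; omega
          rw [h2, hed, nsmul_eq_mul] at h1
          exact h1.symm
        have hne : ((d (b, n) : ℚ)) ≠ 0 := by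
          exact_mod_cast Nat.one_le_iff_ne_zero.mp hdp
        calc MvPowerSeries.coeff d G
            = algebraMap ℚ K ((d (b, n) : ℚ))⁻¹ *
              ((d (b, n) : K) * MvPowerSeries.coeff d G) := by
              rw [← mul_assoc, ← map_natCast (algebraMap ℚ K) (d (b, n)), ← map_mul,
                inv_mul_cancel₀ hne, map_one, one_mul]
          _ = 0 := by rw [hL, mul_zero]
  apply MvPowerSeries.ext
  intro d
  rw [map_zero]
  exact key (w d) d rfl
end

section
/- Assume the correlators satisfy the string equation. Then for every a ∈ A the power series u^a = ⟨⟨Pγ^a⟩⟩_0 has constant term 0 and satisfies u^a ≡ t^a_0 modulo the ideal J generated by {t^b_k : b ∈ A, k ≥ 1}. -/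
open MvPowerSeries

/-- The generating series `⟨⟨X⟩⟩` of a correlator `C` (a symmetric function of its
insertions, modelled as a function of a multiset of pairs `(a, k)`, the pair `(a, k)`
standing for `τ_k(γ_a)`). -/
noncomputable def gen {K : Type*} [CommRing K] [Algebra ℚ K] {A : Type*}
    (C : Multiset (A × ℕ) → K) (X : Multiset (A × ℕ)) : MvPowerSeries (A × ℕ) K :=
  fun d => (((∏ s ∈ d.support, (d s).factorial : ℕ) : ℚ))⁻¹ • C (X + Finsupp.toMultiset d)

/-- `u^a = ⟨⟨P γ^a⟩⟩₀`, where `P = γ_{a₀}` and `γ^a = ∑_b η^{ab} γ_b`. -/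
noncomputable def uSeries {K : Type*} [CommRing K] [Algebra ℚ K] {A : Type*} [Fintype A]
    (C0 : Multiset (A × ℕ) → K) (ηinv : A → A → K) (P : A) (a : A) :
    MvPowerSeries (A × ℕ) K :=
  ∑ b : A, ηinv a b • gen C0 {(P, 0), (b, 0)}

/-- The right hand side of the string equation: `∑_{i : k_i ≥ 1} ⟨⋯ τ_{k_i−1}(γ_{a_i}) ⋯⟩`. -/
def stringRHS {K : Type*} [CommRing K] {A : Type*} [DecidableEq A]
    (C : Multiset (A × ℕ) → K) (X : Multiset (A × ℕ)) : K :=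
  (X.map fun p => if 1 ≤ p.2 then C ((p.1, p.2 - 1) ::ₘ X.erase p) else 0).sum

/-- The string equation for the genus-0 correlators, with the exceptional case
`n = 2`, `k_1 = k_2 = 0` where the right-hand side is `η_{a₁a₂}`. -/
def StringEq0 {K : Type*} [CommRing K] {A : Type*} [DecidableEq A]
    (P : A) (η : A → A → K) (C0 : Multiset (A × ℕ) → K) : Prop :=
  (∀ a b : A, C0 {(P, 0), (a, 0), (b, 0)} = η a b) ∧
  ∀ X : Multiset (A × ℕ), (∀ a b : A, X ≠ {(a, 0), (b, 0)}) →
    C0 ((P, 0) ::ₘ X) = stringRHS C0 X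

/-- The string equation for the genus-1 correlators. -/
def StringEq1 {K : Type*} [CommRing K] {A : Type*} [DecidableEq A]
    (P : A) (C1 : Multiset (A × ℕ) → K) : Prop :=
  ∀ X : Multiset (A × ℕ), C1 ((P, 0) ::ₘ X) = stringRHS C1 X

/-- The genus-0 topological recursion relation (TRR0). -/
def TRR0 {K : Type*} [CommRing K] [Algebra ℚ K] {A : Type*} [Fintype A]
    (ηinv : A → A → K) (C0 : Multiset (A × ℕ) → K) : Prop :=
  ∀ (k1 k2 k3 : ℕ) (a1 a2 a3 : A), 1 ≤ k1 →
    gen C0 {(a1, k1), (a2, k2), (a3, k3)} =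
      ∑ a : A, ∑ b : A, ηinv a b •
        (gen C0 {(a1, k1 - 1), (a, 0)} * gen C0 {(b, 0), (a2, k2), (a3, k3)})

/-- The genus-1 topological recursion relation (TRR1). -/
def TRR1 {K : Type*} [CommRing K] [Algebra ℚ K] {A : Type*} [Fintype A]
    (ηinv : A → A → K) (C0 C1 : Multiset (A × ℕ) → K) : Prop :=
  ∀ (k : ℕ) (a0 : A), 1 ≤ k →
    gen C1 {(a0, k)} =
      (∑ a : A, ∑ b : A, ηinv a b • (gen C0 {(a0, k - 1), (a, 0)} * gen C1 {(b, 0)})) +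
      (1 / 24 : ℚ) • ∑ a : A, ∑ b : A, ηinv a b • gen C0 {(a0, k - 1), (a, 0), (b, 0)}

/-- The matrix `M_a^b = ∂u^b/∂t^a_0`. -/
noncomputable def Mmat {K : Type*} [CommRing K] [Algebra ℚ K] {A : Type*} [Fintype A]
    (C0 : Multiset (A × ℕ) → K) (ηinv : A → A → K) (P : A) :
    Matrix A A (MvPowerSeries (A × ℕ) K) :=
  Matrix.of fun a b => pderivPS (a, 0) (uSeries C0 ηinv P b)

private lemma key_coeff
    {K : Type*} [CommRing K] [Algebra ℚ K] {A : Type*} [Fintype A] [DecidableEq A]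
    (P : A) (η ηinv : A → A → K)
    (hinv' : ∀ a b : A, ∑ c : A, ηinv a c * η c b = if a = b then 1 else 0)
    (C0 : Multiset (A × ℕ) → K) (hs0 : StringEq0 P η C0) (a : A)
    (d : (A × ℕ) →₀ ℕ) (hd : ∀ p ∈ d.support, p.2 = 0) :
    MvPowerSeries.coeff d (uSeries C0 ηinv P a)
      = MvPowerSeries.coeff d (MvPowerSeries.X (a, 0) : MvPowerSeries (A × ℕ) K) := by
  have hM : ∀ p ∈ d.toMultiset, p.2 = 0 := by
    intro p hp
    exact hd p ((Finsupp.mem_toMultiset d p).mp hp)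
  have hcoeff : MvPowerSeries.coeff d (uSeries C0 ηinv P a)
      = ∑ b : A, ηinv a b *
        ((((∏ s ∈ d.support, (d s).factorial : ℕ) : ℚ))⁻¹ •
          C0 ({(P, 0), (b, 0)} + Finsupp.toMultiset d)) := by
    rw [uSeries, map_sum]
    rfl
  by_cases h1 : ∃ p : A × ℕ, d = Finsupp.single p 1
  · obtain ⟨p, rfl⟩ := h1
    have hp2 : p.2 = 0 := hd p (by simp)
    obtain ⟨c, rfl⟩ : ∃ c, p = (c, 0) := ⟨p.1, by ext <;> simp [hp2]⟩
    rw [hcoeff]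
    have hts : Finsupp.toMultiset (Finsupp.single ((c:A),(0:ℕ)) 1) = {(c,0)} := by simp
    have hfac : (∏ s ∈ (Finsupp.single ((c:A),(0:ℕ)) 1).support,
        ((Finsupp.single ((c:A),(0:ℕ)) 1) s).factorial : ℕ) = 1 := by
      simp [Finsupp.support_single_ne_zero]
    rw [hfac, hts]
    have hadd : ∀ b : A, ({(P, 0), (b, 0)} : Multiset (A × ℕ)) + {(c, 0)}
        = {(P, 0), (b, 0), (c, 0)} := fun b => rfl
    have hC : ∀ b : A, C0 ({(P, 0), (b, 0)} + ({(c, 0)} : Multiset (A × ℕ))) = η b c := by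
      intro b; rw [hadd b]; exact hs0.1 b c
    simp only [hC, Nat.cast_one, inv_one, one_smul]
    rw [hinv' a c, MvPowerSeries.coeff_X]
    have : (Finsupp.single ((c:A),(0:ℕ)) 1 = Finsupp.single ((a:A),(0:ℕ)) 1) ↔ a = c := by
      rw [Finsupp.single_left_inj (one_ne_zero)]
      constructor
      · intro h; exact (Prod.ext_iff.mp h).1.symm
      · intro h; rw [h]
    by_cases hac : a = c <;> simp [this, hac]
  · have hne : ∀ (b c c' : A), ((b, 0) ::ₘ d.toMultiset : Multiset (A × ℕ)) ≠ {(c, 0), (c', 0)} := by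
      intro b c c' h
      have hcard : d.toMultiset.card = 1 := by
        have := congrArg Multiset.card h
        simpa using this
      obtain ⟨p, hp⟩ := Multiset.card_eq_one.mp hcard
      exact h1 ⟨p, by
        have := congrArg Multiset.toFinsupp hp
        simpa using this⟩
    have hC0 : ∀ b : A, C0 ({(P, 0), (b, 0)} + Finsupp.toMultiset d) = 0 := by
      intro b
      have hadd : ({(P, 0), (b, 0)} : Multiset (A × ℕ)) + d.toMultiset
          = (P, 0) ::ₘ ((b, 0) ::ₘ d.toMultiset) := by
        simp [Multiset.cons_add]
      rw [hadd, hs0.2 _ (fun c c' => hne b c c'), stringRHS]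
      refine Multiset.sum_eq_zero ?_
      intro x hx
      obtain ⟨p, hp, rfl⟩ := Multiset.mem_map.mp hx
      have hp2 : p.2 = 0 := by
        rcases Multiset.mem_cons.mp hp with h | h
        · rw [h]
        · exact hM p h
      simp [hp2]
    rw [hcoeff]
    simp only [hC0, smul_zero, mul_zero, Finset.sum_const_zero]
    rw [MvPowerSeries.coeff_X]
    have : d ≠ Finsupp.single ((a:A),(0:ℕ)) 1 := fun h => h1 ⟨_, h⟩
    simp [this]

/-- If the correlators satisfy the string equation, then each `u^a = ⟨⟨Pγ^a⟩⟩₀` has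
zero constant term and `u^a ≡ t^a_0` modulo the ideal `J` generated by the variables
`{t^b_k : b ∈ A, k ≥ 1}`. Here `P = γ_{P}` is the puncture (distinguished) index, `η` is
the symmetric invertible metric with inverse matrix `ηinv`, and `C0`, `C1` are the
genus-0 and genus-1 correlators. -/
theorem u_congruent_t0_mod_J
    {K : Type*} [CommRing K] [Algebra ℚ K] {A : Type*} [Fintype A] [DecidableEq A]
    (P : A) (η ηinv : A → A → K)
    (hsymm : ∀ a b : A, η a b = η b a)
    (hinv : ∀ a b : A, ∑ c : A, η a c * ηinv c b = if a = b then 1 else 0)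
    (hinv' : ∀ a b : A, ∑ c : A, ηinv a c * η c b = if a = b then 1 else 0)
    (C0 C1 : Multiset (A × ℕ) → K)
    (hs0 : StringEq0 P η C0) (hs1 : StringEq1 P C1) :
    ∀ a : A,
      MvPowerSeries.constantCoeff (uSeries C0 ηinv P a) = 0 ∧
      memJ (uSeries C0 ηinv P a - MvPowerSeries.X (a, 0)) := by
  intro a
  constructor
  · have := key_coeff P η ηinv hinv' C0 hs0 a 0 (by simp)
    rw [MvPowerSeries.coeff_X] at this
    have h0 : (0 : (A × ℕ) →₀ ℕ) ≠ Finsupp.single ((a:A),(0:ℕ)) 1 := by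
      intro h
      exact one_ne_zero (Finsupp.single_eq_zero.mp h.symm)
    rw [if_neg h0] at this
    rw [← MvPowerSeries.coeff_zero_eq_constantCoeff_apply]
    exact this
  · intro d hd
    have := key_coeff P η ηinv hinv' C0 hs0 a d hd
    rw [map_sub, this, sub_self]
end
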